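/- Let A and B be positive definite Hermitian n×n complex matrices. Then trace(A⁻¹ B) ≥ n (det B / det A)^{1/n}. -/

import Mathlib

open MeasureTheory Complex Metric Matrix
open scoped ComplexOrder

noncomputable section

instance (n : ℕ) : MeasureSpace (EuclideanSpace ℂ (Fin n)) where
  volume := Measure.map (WithLp.toLp 2) (volume : Measure (Fin n → ℂ))

/-- The Wirtinger derivative `∂f/∂z_j`. -/
def wdz {n : ℕ} (j : Fin n) (f : EuclideanSpace ℂ (Fin n) → ℂ)
    (z : EuclideanSpace ℂ (Fin n)) : ℂ :=
  (1 / 2) * (fderiv ℝ f z (EuclideanSpace.single j 1)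
    - Complex.I * fderiv ℝ f z (EuclideanSpace.single j Complex.I))

/-- The conjugate Wirtinger derivative `∂f/∂z̄_j`. -/
def wdzbar {n : ℕ} (j : Fin n) (f : EuclideanSpace ℂ (Fin n) → ℂ)
    (z : EuclideanSpace ℂ (Fin n)) : ℂ :=
  (1 / 2) * (fderiv ℝ f z (EuclideanSpace.single j 1)
    + Complex.I * fderiv ℝ f z (EuclideanSpace.single j Complex.I))

/-- The complex Hessian `(u_{i j̄}) = (∂²u/∂z_i∂z̄_j)` of a real-valued function. -/
def cHess {n : ℕ} (u : EuclideanSpace ℂ (Fin n) → ℝ) (z : EuclideanSpace ℂ (Fin n)) :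
    Matrix (Fin n) (Fin n) ℂ :=
  Matrix.of fun i j => wdz i (fun w => wdzbar j (fun v => ((u v : ℝ) : ℂ)) w) z

/-- `Δu = Σ_j u_{j j̄}` (one quarter of the real Laplacian). -/
def cLap {n : ℕ} (u : EuclideanSpace ℂ (Fin n) → ℝ) (z : EuclideanSpace ℂ (Fin n)) : ℝ :=
  ((cHess u z).trace).re

/-- `(u^{i j̄})`, the transposed inverse of the complex Hessian. -/
def cHessInvT {n : ℕ} (u : EuclideanSpace ℂ (Fin n) → ℝ) (z : EuclideanSpace ℂ (Fin n)) :
    Matrix (Fin n) (Fin n) ℂ :=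
  ((cHess u z)⁻¹)ᵀ

/-!
Write `A⁻¹ = Rᴴ R` (e.g. with `R` the square root of `A⁻¹`). Then `trace (A⁻¹ B) = trace (R B Rᴴ)`
and `det (R B Rᴴ) = det B / det A`, so the inequality is AM–GM for the eigenvalues of the positive
semidefinite matrix `R B Rᴴ`.
-/

namespace Matrix

variable {ι 𝕜 : Type*} [Fintype ι] [DecidableEq ι] [RCLike 𝕜]

open scoped MatrixOrder in
lemma PosSemidef.exists_eq_conjTranspose_mul_self {M : Matrix ι ι 𝕜} (hM : M.PosSemidef) :
    ∃ R : Matrix ι ι 𝕜, M = Rᴴ * R :=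
  ⟨CFC.sqrt M, by
    rw [(nonneg_iff_posSemidef.mp (CFC.sqrt_nonneg M)).isHermitian.eq,
      CFC.sqrt_mul_sqrt_self M hM.nonneg]⟩

lemma PosSemidef.card_mul_re_det_rpow_le_re_trace {A : Matrix ι ι 𝕜} (hA : A.PosSemidef) :
    (Fintype.card ι : ℝ) * RCLike.re A.det ^ ((1 : ℝ) / Fintype.card ι) ≤ RCLike.re A.trace := by
  rcases isEmpty_or_nonempty ι with _ | _
  · simp
  have hcard : (0 : ℝ) < Fintype.card ι := mod_cast Fintype.card_pos
  have amgm := Real.geom_mean_le_arith_mean Finset.univ (fun _ ↦ 1) hA.1.eigenvalues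
    (fun _ _ ↦ zero_le_one) (by simpa using hcard) (fun i _ ↦ hA.eigenvalues_nonneg i)
  simp only [Real.rpow_one, Finset.sum_const, Finset.card_univ, nsmul_eq_mul, mul_one,
    one_mul] at amgm
  rw [hA.1.det_eq_prod_eigenvalues, hA.1.trace_eq_sum_eigenvalues, ← RCLike.ofReal_prod,
    ← RCLike.ofReal_sum, RCLike.ofReal_re, RCLike.ofReal_re, one_div, mul_comm]
  exact (le_div_iff₀ hcard).mp amgm

lemma PosDef.card_mul_re_det_div_rpow_le_re_trace_inv_mul {A B : Matrix ι ι 𝕜} (hA : A.PosDef)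
    (hB : B.PosSemidef) :
    (Fintype.card ι : ℝ) * RCLike.re (B.det / A.det) ^ ((1 : ℝ) / Fintype.card ι) ≤
      RCLike.re (A⁻¹ * B).trace := by
  obtain ⟨R, hAinv⟩ := hA.inv.posSemidef.exists_eq_conjTranspose_mul_self
  have htrace : (A⁻¹ * B).trace = (R * B * Rᴴ).trace := by
    rw [hAinv, mul_assoc, trace_mul_comm, mul_assoc]
  have hdet : (R * B * Rᴴ).det = B.det / A.det := by
    rw [det_mul, det_mul, mul_right_comm, ← det_mul, det_mul_comm, ← hAinv, det_nonsing_inv,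
      Ring.inverse_eq_inv', mul_comm, div_eq_mul_inv]
  rw [htrace, ← hdet]
  exact (hB.mul_mul_conjTranspose_same R).card_mul_re_det_rpow_le_re_trace

end Matrix

/-- For positive definite Hermitian matrices `A`, `B`:
`trace(A⁻¹ B) ≥ n (det B / det A)^{1/n}` (arithmetic–geometric mean inequality). -/
theorem trace_inv_mul_ge_det_ratio_rpow
    (n : ℕ) (A B : Matrix (Fin n) (Fin n) ℂ) (hA : A.PosDef) (hB : B.PosDef) :
    (n : ℝ) * (B.det.re / A.det.re) ^ ((1 : ℝ) / n) ≤ ((A⁻¹ * B).trace).re := by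
  obtain ⟨a, -, hdetA⟩ := RCLike.pos_iff_exists_ofReal.mp hA.det_pos
  simpa [← hdetA] using hA.card_mul_re_det_div_rpow_le_re_trace_inv_mul hB.posSemidef
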